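/- arXiv:2404.01354 — 3 statements merged into one kernel-verified Lean document; each statement's English description precedes it below -/
import Mathlib

section
/- For tables over G and distinct variables x ≠ y: E_{xy} ⋈ del_x(E_{xy} ⋈ T) = E_{xy} ⋈ T for every table T; consequently E_{xy} ⋈ del_x(E_{xy} ⋈ T) ≤ T. -/
open Classical
noncomputable section

/-- The domain (set of defined columns) of a named tuple, modeled as `ℕ → Option G`. -/
def tdom {G : Type*} (t : ℕ → Option G) : Set ℕ := {x | (t x).isSome}

/-- Restriction of a named tuple to a set of columns. -/
def restr {G : Type*} (t : ℕ → Option G) (X : Set ℕ) : ℕ → Option G :=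
  fun x => if x ∈ X then t x else none

/-- `T` is a table with schema `X`: either `T` is empty with schema `var` (= `Set.univ`),
or `T` is nonempty, `X` is finite, and every row of `T` has domain `X`. -/
def HasSchema {G : Type*} (T : Set (ℕ → Option G)) (X : Set ℕ) : Prop :=
  (T = ∅ ∧ X = Set.univ) ∨ (T ≠ ∅ ∧ X.Finite ∧ ∀ t ∈ T, tdom t = X)

/-- Natural join of tables `T1 ⊆ G^{X1}` and `T2 ⊆ G^{X2}`. -/
def join {G : Type*} (T1 T2 : Set (ℕ → Option G)) (X1 X2 : Set ℕ) :
    Set (ℕ → Option G) :=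
  {t | tdom t = X1 ∪ X2 ∧ restr t X1 ∈ T1 ∧ restr t X2 ∈ T2}

/-- Deletion of column `x`. -/
def delx {G : Type*} (x : ℕ) (T : Set (ℕ → Option G)) : Set (ℕ → Option G) :=
  {s | ∃ t ∈ T, s = restr t ({x}ᶜ)}

/-- The equality table `E_{xy}`. -/
def Exy (G : Type*) (x y : ℕ) : Set (ℕ → Option G) :=
  {t | tdom t = ({x, y} : Set ℕ) ∧ t x = t y}

lemma not_mem_tdom {G : Type*} {t : ℕ → Option G} {z : ℕ} (h : z ∉ tdom t) :
    t z = none := by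
  rwa [tdom, Set.mem_setOf_eq, Option.isSome_iff_ne_none, not_not] at h

lemma restr_eq_self {G : Type*} {t : ℕ → Option G} {S : Set ℕ} (h : tdom t ⊆ S) :
    restr t S = t := by
  funext z
  simp only [restr]
  split_ifs with hz
  · rfl
  · exact (not_mem_tdom (fun hm => hz (h hm))).symm

lemma restr_congr {G : Type*} {t : ℕ → Option G} {A B : Set ℕ}
    (h : ∀ z, z ∈ tdom t → (z ∈ A ↔ z ∈ B)) : restr t A = restr t B := by
  funext z
  simp only [restr]
  by_cases hz : z ∈ tdom t
  · rw [if_congr (h z hz) rfl rfl]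
  · split_ifs <;> simp [not_mem_tdom hz]

lemma tdom_restr {G : Type*} (t : ℕ → Option G) (S : Set ℕ) :
    tdom (restr t S) = tdom t ∩ S := by
  ext z
  simp only [tdom, restr, Set.mem_setOf_eq, Set.mem_inter_iff]
  split_ifs with hz <;> simp [hz]

lemma restr_apply_mem {G : Type*} (t : ℕ → Option G) {S : Set ℕ} {z : ℕ} (h : z ∈ S) :
    restr t S z = t z := if_pos h

/-- For `x ≠ y`: `E_{xy} ⋈ del_x(E_{xy} ⋈ T) = E_{xy} ⋈ T`, and consequently
`E_{xy} ⋈ del_x(E_{xy} ⋈ T) ≤ T` (order: `S ≤ T ↔ S = S ⋈ T`). -/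
theorem stmt5 {G : Type*} (x y : ℕ) (hxy : x ≠ y) (T : Set (ℕ → Option G))
    (X : Set ℕ) (hT : HasSchema T X) :
    join (Exy G x y) (delx x (join (Exy G x y) T {x, y} X)) {x, y}
        (({x, y} ∪ X) \ {x}) = join (Exy G x y) T {x, y} X
    ∧ join (Exy G x y) (delx x (join (Exy G x y) T {x, y} X)) {x, y}
        (({x, y} ∪ X) \ {x})
      = join (join (Exy G x y) (delx x (join (Exy G x y) T {x, y} X)) {x, y}
          (({x, y} ∪ X) \ {x})) T ({x, y} ∪ X) X := by
  have hU : ({x, y} : Set ℕ) ∪ (({x, y} ∪ X) \ {x}) = {x, y} ∪ X := by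
    ext z
    simp only [Set.mem_union, Set.mem_diff, Set.mem_insert_iff, Set.mem_singleton_iff]
    constructor
    · rintro (h | ⟨h, _⟩) <;> tauto
    · intro h
      by_cases hzx : z = x
      · exact Or.inl (Or.inl hzx)
      · exact Or.inr ⟨h, hzx⟩
  have key : join (Exy G x y) (delx x (join (Exy G x y) T {x, y} X)) {x, y}
        (({x, y} ∪ X) \ {x}) = join (Exy G x y) T {x, y} X := by
    ext t
    constructor
    · rintro ⟨hdom, hE, s, ⟨hsdom, hsE, hsT⟩, hrs⟩
      rw [hU] at hdom
      -- show t = s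
      have hts : t = s := by
        funext z
        by_cases hzx : z = x
        · rw [hzx]
          have htx : t x = t y := by
            have h1 := restr_apply_mem t (S := ({x, y} : Set ℕ)) (Or.inl rfl)
            have h2 := restr_apply_mem t (S := ({x, y} : Set ℕ)) (z := y) (Or.inr rfl)
            rw [← h1, ← h2]; exact hE.2
          have hsx : s x = s y := by
            have h1 := restr_apply_mem s (S := ({x, y} : Set ℕ)) (Or.inl rfl)
            have h2 := restr_apply_mem s (S := ({x, y} : Set ℕ)) (z := y) (Or.inr rfl)
            rw [← h1, ← h2]; exact hsE.2
          have hy : t y = s y := by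
            have := congrFun hrs y
            have hymem : y ∈ (({x, y} : Set ℕ) ∪ X) \ {x} := ⟨Or.inl (Or.inr rfl), hxy.symm⟩
            have hymem' : y ∈ ({x}ᶜ : Set ℕ) := hxy.symm
            rwa [restr_apply_mem t hymem, restr_apply_mem s hymem'] at this
          rw [htx, hsx, hy]
        · have h := congrFun hrs z
          simp only [restr] at h
          rw [if_pos (show z ∈ ({x}ᶜ : Set ℕ) from hzx)] at h
          by_cases hm : z ∈ ((({x, y} : Set ℕ) ∪ X) \ {x})
          · rwa [if_pos hm] at h
          · rw [if_neg hm] at h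
            rw [← h]
            exact not_mem_tdom (by rw [hdom]; exact fun hz => hm ⟨hz, hzx⟩)
      rw [hts]
      exact ⟨hsdom, hsE, hsT⟩
    · intro ht
      obtain ⟨hdom, hE, hTm⟩ := ht
      refine ⟨by rw [hU]; exact hdom, hE, t, ⟨hdom, hE, hTm⟩, ?_⟩
      apply restr_congr
      intro z hz
      rw [hdom] at hz
      simp only [Set.mem_diff, Set.mem_compl_iff, Set.mem_singleton_iff]
      exact ⟨fun h => h.2, fun h => ⟨hz, h⟩⟩
  refine ⟨key, ?_⟩
  rw [key]
  ext t
  constructor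
  · intro ht
    obtain ⟨hdom, hE, hTm⟩ := ht
    refine ⟨by rw [Set.union_assoc, Set.union_self]; exact hdom, ?_, hTm⟩
    rw [restr_eq_self (by rw [hdom])]
    exact ⟨hdom, hE, hTm⟩
  · rintro ⟨hdom, hJ, hTm⟩
    rw [Set.union_assoc, Set.union_self] at hdom
    rwa [restr_eq_self (by rw [hdom])] at hJ
end
end

section
/- In a projectional semilattice, for functions μ: X → Z and ν: Z → Y between finite variable sets: (i) e_μ ∧ e_ν ≤ e_{ν∘μ}; (ii) e_μ ∧ e_ν = e_{ν∘μ} ∧ e_ν; (iii) if μ is a folding, then e_μ ∧ e_ν = e_{ν∘μ}. -/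
/-- A projectional semilattice: a bounded semilattice `(V, ⊓, ⊥, ⊤)` with
cylindrifications `c x`, diagonals `d x y` and a domain function `dm`,
satisfying axioms (PS0)–(PS12). Variables are modeled by `ℕ`. -/
class ProjSemilattice (V : Type*) extends SemilatticeInf V, BoundedOrder V where
  c : ℕ → V → V
  d : ℕ → ℕ → V
  dm : V → Set ℕ
  /-- (PS1) -/
  c_bot : ∀ x, c x (⊥ : V) = ⊥
  /-- (PS2) -/
  le_c : ∀ x (u : V), u ≤ c x u
  /-- (PS3) -/
  c_inf : ∀ x (u v : V), c x (u ⊓ c x v) = c x u ⊓ c x v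
  /-- (PS4) -/
  c_comm : ∀ x y (u : V), c x (c y u) = c y (c x u)
  /-- (PS5) -/
  dim_ax : ∀ x (u : V), u ≠ ⊥ → (u ≠ c x u ↔ u ≤ d x x)
  /-- (PS6) -/
  d_comp : ∀ x y z, x ≠ y → x ≠ z → (d y z : V) = c x (d y x ⊓ d x z)
  /-- (PS7) -/
  d_inj : ∀ x y (u : V), x ≠ y → d x y ⊓ c x (d x y ⊓ u) ≤ u
  /-- (PS8) -/
  dm_finite : ∀ (u : V), u ≠ ⊥ → (dm u).Finite
  /-- (PS9) -/
  dm_def : ∀ (u : V), dm u = {x | u ≤ d x x}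
  /-- (PS10) -/
  dm_empty : ∀ (u : V), dm u = ∅ → u = ⊤
  /-- (PS11) -/
  d_ne_bot : ∀ x, (d x x : V) ≠ ⊥
  /-- (PS12) -/
  d_symm : ∀ x y, (d x y : V) = d y x

open ProjSemilattice

/-- Generalized cylindrification `C_Z(u)`, where the finite set `Z` is given by an
enumeration (a list); well-defined on sets by (PS4). -/
def Cl {V : Type*} [ProjSemilattice V] (l : List ℕ) (u : V) : V :=
  l.foldr (fun z a => c z a) u

/-- Generalized diagonal `e_λ := ⋀_{x ∈ X} d_{x, λ(x)}` of a function `λ` defined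
on the finite variable set `X`. -/
def eF (V : Type*) [ProjSemilattice V] (X : Finset ℕ) (f : ℕ → ℕ) : V :=
  X.inf (fun x => d x (f x))


section Aux
variable {V : Type*} [ProjSemilattice V]

lemma d_le_d_self {x z : ℕ} (h : z ≠ x) : (d x z : V) ≤ d x x := by
  have key : (d x x : V) = c z (d x z ⊓ d z x) := d_comp z x x h h
  rw [d_symm z x, inf_idem] at key
  rw [key]; exact le_c z _

lemma d_trans (x y z : ℕ) : (d x z : V) ⊓ d z y ≤ d x y := by
  by_cases hzx : z = x
  · subst hzx; exact inf_le_right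
  by_cases hzy : z = y
  · subst hzy; exact inf_le_left
  by_cases hxy : x = y
  · subst hxy
    exact le_trans inf_le_left (d_le_d_self hzx)
  · have key : (d x y : V) = c z (d x z ⊓ d z y) := d_comp z x y hzx hzy
    rw [key]; exact le_c z _

end Aux

/-- For `μ : X → Z` and `ν : Z → Y`: (i) `e_μ ⊓ e_ν ≤ e_{ν∘μ}`;
(ii) `e_μ ⊓ e_ν = e_{ν∘μ} ⊓ e_ν`; (iii) if `μ` is a folding then
`e_μ ⊓ e_ν = e_{ν∘μ}`. -/
theorem stmt16 {V : Type*} [ProjSemilattice V] (X Z Y : Finset ℕ) (μ ν : ℕ → ℕ)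
    (hμ : ∀ x ∈ X, μ x ∈ Z) (hν : ∀ z ∈ Z, ν z ∈ Y) :
    eF V X μ ⊓ eF V Z ν ≤ eF V X (fun x => ν (μ x))
    ∧ eF V X μ ⊓ eF V Z ν = eF V X (fun x => ν (μ x)) ⊓ eF V Z ν
    ∧ ((Z ⊆ X ∧ ∀ z ∈ Z, μ z = z) →
        eF V X μ ⊓ eF V Z ν = eF V X (fun x => ν (μ x))) := by
  have h1 : eF V X μ ⊓ eF V Z ν ≤ eF V X (fun x => ν (μ x)) := by
    apply Finset.le_inf
    intro x hx
    calc eF V X μ ⊓ eF V Z ν ≤ d x (μ x) ⊓ d (μ x) (ν (μ x)) :=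
          inf_le_inf (Finset.inf_le hx) (Finset.inf_le (hμ x hx))
      _ ≤ d x (ν (μ x)) := d_trans _ _ _
  have h2 : eF V X (fun x => ν (μ x)) ⊓ eF V Z ν ≤ eF V X μ := by
    apply Finset.le_inf
    intro x hx
    calc eF V X (fun x => ν (μ x)) ⊓ eF V Z ν
        ≤ d x (ν (μ x)) ⊓ d (ν (μ x)) (μ x) := by
          refine inf_le_inf (Finset.inf_le hx) ?_
          rw [d_symm]
          exact Finset.inf_le (hμ x hx)
      _ ≤ d x (μ x) := d_trans _ _ _
  have heq : eF V X μ ⊓ eF V Z ν = eF V X (fun x => ν (μ x)) ⊓ eF V Z ν := by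
    apply le_antisymm
    · exact le_inf h1 inf_le_right
    · exact le_inf h2 inf_le_right
  refine ⟨h1, heq, ?_⟩
  rintro ⟨hZX, hfold⟩
  have h3 : eF V X (fun x => ν (μ x)) ≤ eF V Z ν := by
    apply Finset.le_inf
    intro z hz
    have h := Finset.inf_le (f := fun x => (d x (ν (μ x)) : V)) (hZX hz)
    rw [hfold z hz] at h
    exact h
  rw [heq, inf_eq_left.mpr h3]
end

section
/- In a projectional semilattice, for a domain-disjoint function λ: X → Y (i.e. X ∩ Y = ∅, X and Y finite) and u ≠ 0 with dom(u) = Y: C_X(u ∧ e_λ) = u. Dually, for any u ≤ e_λ: C_X(u) ∧ e_λ = u. -/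
open ProjSemilattice

section Aux
variable {V : Type*} [ProjSemilattice V]

lemma cc_idem (x : ℕ) (u : V) : c x (c x u) = c x u := by
  have h := c_inf x (c x u) u
  rw [inf_idem] at h
  exact le_antisymm (h.le.trans inf_le_right) (le_c _ _)

lemma cc_le {x : ℕ} {u v : V} (h : u ≤ c x v) : c x u ≤ c x v := by
  have h1 : u ⊓ c x v = u := inf_eq_left.2 h
  calc c x u = c x (u ⊓ c x v) := by rw [h1]
    _ = c x u ⊓ c x v := c_inf _ _ _
    _ ≤ c x v := inf_le_right

lemma cc_mono {x : ℕ} {u v : V} (h : u ≤ v) : c x u ≤ c x v :=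
  cc_le (h.trans (le_c _ _))

lemma c_d_of_ne {z x y : ℕ} (hzx : z ≠ x) (hzy : z ≠ y) :
    c z (d x y : V) = d x y := by
  have h := d_comp (V := V) z x y hzx hzy
  rw [h, cc_idem]

lemma c_fix_inf {z : ℕ} {u v : V} (hu : c z u = u) (hv : c z v = v) :
    c z (u ⊓ v) = u ⊓ v := by
  conv_lhs => rw [← hv]
  rw [c_inf, hu, hv]

lemma le_Cl (l : List ℕ) (u : V) : u ≤ Cl l u := by
  induction l with
  | nil => exact le_rfl
  | cons x t ih => exact ih.trans (le_c x (Cl t u))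

lemma Cl_mono {l : List ℕ} {u v : V} (h : u ≤ v) : Cl l u ≤ Cl l v := by
  induction l with
  | nil => exact h
  | cons x t ih => exact cc_mono ih

lemma Cl_fix {l : List ℕ} {v : V} (h : ∀ z ∈ l, c z v = v) : Cl l v = v := by
  induction l with
  | nil => rfl
  | cons x t ih =>
    have : Cl (x :: t) v = c x (Cl t v) := rfl
    rw [this, ih (fun z hz => h z (.tail _ hz)), h x (.head _)]

lemma c_Cl_mem {x : ℕ} {l : List ℕ} (h : x ∈ l) (u : V) :
    c x (Cl l u) = Cl l u := by
  induction l with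
  | nil => cases h
  | cons a t ih =>
    have hc : Cl (a :: t) u = c a (Cl t u) := rfl
    rcases List.mem_cons.1 h with h | h
    · rw [hc, h, cc_idem]
    · rw [hc, c_comm, ih h]

lemma Cl_dedup (l : List ℕ) (u : V) : Cl l.dedup u = Cl l u := by
  induction l with
  | nil => rfl
  | cons a t ih =>
    by_cases ha : a ∈ t
    · rw [List.dedup_cons_of_mem ha, ih]
      exact (c_Cl_mem ha u).symm
    · rw [List.dedup_cons_of_notMem ha]
      show c a (Cl t.dedup u) = c a (Cl t u)
      rw [ih]

lemma c_subst (x y : ℕ) (u : V) (hxy : x ≠ y) (hfix : c x u = u)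
    (hdy : u ≤ d y y) : c x (u ⊓ d x y) = u := by
  have h1 : (d y y : V) = c x (d x y) := by
    have h := d_comp (V := V) x y y hxy hxy
    rwa [d_symm y x, inf_idem] at h
  have h2 : u ≤ c x (d x y) := hdy.trans h1.le
  calc c x (u ⊓ d x y) = c x (d x y ⊓ c x u) := by rw [hfix, inf_comm]
    _ = c x (d x y) ⊓ c x u := c_inf _ _ _
    _ = u := by rw [hfix, inf_eq_right.2 h2]

lemma part1_aux (lam : ℕ → ℕ) :
    ∀ (t : List ℕ), t.Nodup →
    ∀ (v : V), (∀ z ∈ t, c z v = v) → (∀ z ∈ t, v ≤ d (lam z) (lam z)) →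
    (∀ z ∈ t, ∀ w ∈ t, z ≠ lam w) →
    Cl t (v ⊓ eF V t.toFinset lam) = v := by
  intro t
  induction t with
  | nil =>
    intro _ v _ _ _
    show v ⊓ eF V ∅ lam = v
    rw [eF, Finset.inf_empty, inf_top_eq]
  | cons x s ih =>
    intro hnd v h1 h2 h3
    have hxs : x ∉ s := (List.nodup_cons.1 hnd).1
    have hsnd := (List.nodup_cons.1 hnd).2
    have hxy : x ≠ lam x := h3 x (.head _) x (.head _)
    have he : eF V (x :: s).toFinset lam = d x (lam x) ⊓ eF V s.toFinset lam := by
      rw [List.toFinset_cons, eF, Finset.inf_insert]; rfl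
    have hv' : ∀ z ∈ s, c z (v ⊓ d x (lam x)) = v ⊓ d x (lam x) := fun z hz =>
      c_fix_inf (h1 z (.tail _ hz))
        (c_d_of_ne (fun h => hxs (h ▸ hz)) (h3 z (.tail _ hz) x (.head _)))
    have hih := ih hsnd (v ⊓ d x (lam x)) hv'
      (fun z hz => inf_le_left.trans (h2 z (.tail _ hz)))
      (fun z hz w hw => h3 z (.tail _ hz) w (.tail _ hw))
    have hgoal : Cl (x :: s) (v ⊓ eF V (x :: s).toFinset lam)
        = c x (Cl s ((v ⊓ d x (lam x)) ⊓ eF V s.toFinset lam)) := by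
      rw [he, ← inf_assoc]; rfl
    rw [hgoal, hih, c_subst x (lam x) v hxy (h1 x (.head _)) (h2 x (.head _))]

lemma part2_aux (X : Finset ℕ) (lam : ℕ → ℕ) :
    ∀ (t : List ℕ), t.Nodup → (∀ z ∈ t, z ∈ X) →
    (∀ z ∈ t, ∀ w ∈ t, z ≠ lam w) →
    ∀ u : V, u ≤ eF V X lam → Cl t u ⊓ eF V X lam = u := by
  intro t
  induction t with
  | nil => intro _ _ _ u hu; exact inf_eq_left.2 hu
  | cons x s ih =>
    intro hnd hX h3 u hu
    have hxs : x ∉ s := (List.nodup_cons.1 hnd).1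
    have hxy : x ≠ lam x := h3 x (.head _) x (.head _)
    have hed : eF V X lam ≤ d x (lam x) := Finset.inf_le (hX x (.head _))
    have hcd : ∀ z ∈ s, c z (d x (lam x) : V) = d x (lam x) := fun z hz =>
      c_d_of_ne (fun h => hxs (h ▸ hz)) (h3 z (.tail _ hz) x (.head _))
    have hCl_le : Cl s u ≤ d x (lam x) := by
      have h := Cl_mono (l := s) (hu.trans hed)
      rwa [Cl_fix hcd] at h
    have hkey : (d x (lam x) : V) ⊓ c x (Cl s u) ≤ Cl s u := by
      have h7 := d_inj x (lam x) (Cl s u) hxy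
      rwa [inf_eq_right.2 hCl_le] at h7
    have ihe := ih (List.nodup_cons.1 hnd).2 (fun z hz => hX z (.tail _ hz))
      (fun z hz w hw => h3 z (.tail _ hz) w (.tail _ hw)) u hu
    refine le_antisymm ?_ (le_inf (le_Cl _ _) hu)
    have hcons : Cl (x :: s) u = c x (Cl s u) := rfl
    have hle : Cl (x :: s) u ⊓ eF V X lam ≤ Cl s u := by
      rw [hcons]
      exact (le_inf (inf_le_right.trans hed) inf_le_left).trans hkey
    calc Cl (x :: s) u ⊓ eF V X lam ≤ Cl s u ⊓ eF V X lam :=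
          le_inf hle inf_le_right
      _ = u := ihe

end Aux

/-- For a domain-disjoint `λ : X → Y`: if `u ≠ ⊥` with `dom(u) = Y` then
`C_X(u ⊓ e_λ) = u`; dually, if `u ≤ e_λ` then `C_X(u) ⊓ e_λ = u`. -/
theorem stmt17 {V : Type*} [ProjSemilattice V] (X Y : Finset ℕ)
    (hdisj : Disjoint X Y) (lam : ℕ → ℕ) (hlam : ∀ x ∈ X, lam x ∈ Y)
    (lX : List ℕ) (hlX : lX.toFinset = X) :
    (∀ u : V, u ≠ ⊥ → dm u = ↑Y → Cl lX (u ⊓ eF V X lam) = u)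
    ∧ (∀ u : V, u ≤ eF V X lam → Cl lX u ⊓ eF V X lam = u) := by
  have hdisj' : ∀ z ∈ X, z ∉ Y := fun z hz => Finset.disjoint_left.1 hdisj hz
  have hnd : lX.dedup.Nodup := lX.nodup_dedup
  have hmem : ∀ z, z ∈ lX.dedup ↔ z ∈ X := by
    intro z; rw [List.mem_dedup, ← List.mem_toFinset, hlX]
  have htf : lX.dedup.toFinset = X := by
    ext z; rw [List.mem_toFinset, hmem z]
  have h3 : ∀ z ∈ lX.dedup, ∀ w ∈ lX.dedup, z ≠ lam w := by
    intro z hz w hw h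
    exact hdisj' z ((hmem z).1 hz) (h ▸ hlam w ((hmem w).1 hw))
  constructor
  · intro u hub hdm
    have h1 : ∀ z ∈ lX.dedup, c z u = u := by
      intro z hz
      have hzY : z ∉ Y := hdisj' z ((hmem z).1 hz)
      have hnle : ¬ u ≤ d z z := by
        intro hle
        apply hzY
        have hz' : z ∈ dm u := by rw [dm_def]; exact hle
        rw [hdm] at hz'
        exact_mod_cast hz'
      by_contra hne
      exact hnle ((dim_ax z u hub).1 (fun h => hne h.symm))
    have h2 : ∀ z ∈ lX.dedup, u ≤ d (lam z) (lam z) := by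
      intro z hz
      have hy : lam z ∈ Y := hlam z ((hmem z).1 hz)
      have : lam z ∈ dm u := by rw [hdm]; exact_mod_cast hy
      rw [dm_def] at this; exact this
    have h := part1_aux lam lX.dedup hnd u h1 h2 h3
    rw [htf] at h
    rw [← Cl_dedup]
    exact h
  · intro u hu
    have h := part2_aux X lam lX.dedup hnd (fun z hz => (hmem z).1 hz) h3 u hu
    rw [← Cl_dedup]
    exact h
end
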